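/- Let (Ω, μ) be a measure space and A ⊆ Ω measurable with μ(A) ≠ 0. Let p₁, p₂ : Ω → [0,∞) be measurable, integrable, with p₁ + p₂ > 0 μ-a.e. on A. Let φ : [0,∞)² → [0,∞) be continuous, convex, strictly increasing in each coordinate, with φ(0,0)=0 and lim_{t→∞} φ(tz) = ∞ for nonzero z. Write S = ∫_A +̃_φ(p₁, p₂) dμ, P₁ = ∫_A p₁ dμ, P₂ = ∫_A p₂ dμ. Then φ(P₁/S, P₂/S) ≤ 1. -/

import Mathlib

/-!
Write `S = +̃_φ(p₁, p₂)`. Where `p₁ + p₂ > 0`, the map `l ↦ φ(p₁/l, p₂/l)` decreases strictly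
from `∞` to `φ(0,0) = 0` on `(0, ∞)`, so `S > 0` and `φ(p₁/S, p₂/S) = 1`. Jensen's inequality for
the convex `φ`, applied to `(p₁/S, p₂/S)` under the probability measure `S dμ / ∫_A S dμ` on `A`,
then gives `φ(P₁/∫_A S, P₂/∫_A S) ≤ ⨍ φ(p₁/S, p₂/S) = 1`. The same monotonicity yields
`{S < c} = {φ(p₁/c, p₂/c) < 1}`, hence measurability of `S`, and `S ≤ (p₁ + p₂)/t` for any
`t > 0` with `φ(t, t) < 1`, hence integrability.
-/

open Filter Set MeasureTheory

/-- The Orlicz addition of two nonnegative numbers: the unique `λ > 0` with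
`φ(a/λ, b/λ) = 1` when `a + b > 0`, and `0` when `a = b = 0`. -/
noncomputable def orliczAdd (φ : ℝ → ℝ → ℝ) (a b : ℝ) : ℝ :=
  sInf {l : ℝ | 0 < l ∧ φ (a / l) (b / l) = 1}

theorem ContinuousOn.measurable_comp {α β γ : Type*} [MeasurableSpace α] [TopologicalSpace β]
    [MeasurableSpace β] [OpensMeasurableSpace β] [TopologicalSpace γ] [MeasurableSpace γ]
    [BorelSpace γ] {g : β → γ} {s : Set β} {f : α → β} (hg : ContinuousOn g s)
    (hf : Measurable f) (hfs : ∀ x, f x ∈ s) : Measurable fun x => g (f x) :=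
  hg.domRestrict.measurable.comp (hf.subtype_mk (h := hfs))

theorem integral_pos_of_ae_pos {α : Type*} [MeasurableSpace α] {μ : Measure α} [NeZero μ]
    {f : α → ℝ} (hfi : Integrable f μ) (hf : ∀ᵐ x ∂μ, 0 < f x) : 0 < ∫ x, f x ∂μ := by
  have hf0 : 0 ≤ᵐ[μ] f := hf.mono fun _ hx => hx.le
  refine (integral_nonneg_of_ae hf0).lt_of_ne fun h => NeZero.ne μ ?_
  have hzero := (integral_eq_zero_iff_of_nonneg_ae hf0 hfi).1 h.symm
  have hfalse : ∀ᵐ x ∂μ, False := (hf.and hzero).mono fun _ hx => hx.1.ne' hx.2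
  exact ae_eq_bot.1 (eventually_false_iff_eq_bot.1 hfalse)

theorem ConvexOn.map_integral_smul_le {α E : Type*} [MeasurableSpace α] {μ : Measure α}
    [NormedAddCommGroup E] [NormedSpace ℝ E] [CompleteSpace E]
    {s : Set E} {g : E → ℝ} {w : α → ℝ} {f : α → E}
    (hg : ConvexOn ℝ s g) (hgc : ContinuousOn g s) (hsc : IsClosed s)
    (hw : AEMeasurable w μ) (hw0 : ∀ x, 0 ≤ w x) (hwpos : 0 < ∫ x, w x ∂μ)
    (hfs : ∀ᵐ x ∂μ, f x ∈ s) (hfi : Integrable (fun x => w x • f x) μ)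
    (hgi : Integrable (fun x => w x * g (f x)) μ) :
    g ((∫ x, w x ∂μ)⁻¹ • ∫ x, w x • f x ∂μ) ≤ (∫ x, w x ∂μ)⁻¹ * ∫ x, w x * g (f x) ∂μ := by
  set ν := μ.withDensity fun x => ((w x).toNNReal : ENNReal)
  have hw' : AEMeasurable (fun x => (w x).toNNReal) μ := hw.real_toNNReal
  have hcoe : ∀ x, ((w x).toNNReal : ℝ) = w x := fun x => Real.coe_toNNReal _ (hw0 x)
  have hsmul : (fun x => (w x).toNNReal • f x) = fun x => w x • f x := by
    simp only [NNReal.smul_def, hcoe]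
  have hmul : (fun x => (w x).toNNReal • g (f x)) = fun x => w x * g (f x) := by
    simp only [NNReal.smul_def, hcoe, smul_eq_mul]
  have hνuniv : ν.real univ = ∫ x, w x ∂μ := by
    have := integral_withDensity_eq_integral_smul₀ hw' fun _ => (1 : ℝ)
    simp only [integral_const, smul_eq_mul, mul_one, NNReal.smul_def, hcoe] at this
    exact this
  have hν : 0 < ν univ ∧ ν univ < ⊤ := ENNReal.toReal_pos_iff.1 (hνuniv.symm ▸ hwpos :)
  have : IsFiniteMeasure ν := ⟨hν.2⟩
  have : NeZero ν := ⟨fun h => by simp [h] at hν⟩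
  have hjensen := hg.map_average_le hgc hsc ((withDensity_absolutelyContinuous _ _).ae_le hfs)
    ((integrable_withDensity_iff_integrable_smul₀ hw').2 (hsmul ▸ hfi))
    ((integrable_withDensity_iff_integrable_smul₀ hw').2 (hmul ▸ hgi))
  rwa [average_eq, average_eq, hνuniv, integral_withDensity_eq_integral_smul₀ hw',
    integral_withDensity_eq_integral_smul₀ hw', hsmul, hmul, smul_eq_mul] at hjensen

section OrliczAddition

variable {φ : ℝ → ℝ → ℝ} {a b : ℝ}

theorem orliczAdd_nonneg (φ : ℝ → ℝ → ℝ) (a b : ℝ) : 0 ≤ orliczAdd φ a b :=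
  Real.sInf_nonneg fun _ hl => hl.1.le

theorem orliczAdd_zero_zero (h0 : φ 0 0 ≠ 1) : orliczAdd φ 0 0 = 0 := by
  have : {l : ℝ | 0 < l ∧ φ (0 / l) (0 / l) = 1} = ∅ := by simp [h0]
  rw [orliczAdd, this, Real.sInf_empty]

theorem orliczAdd_eq_of_map_div_eq_one (hanti : StrictAntiOn (fun l => φ (a / l) (b / l)) (Ioi 0))
    {l : ℝ} (hl : 0 < l) (h : φ (a / l) (b / l) = 1) : orliczAdd φ a b = l := by
  have : {l' : ℝ | 0 < l' ∧ φ (a / l') (b / l') = 1} = {l} := by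
    ext l'
    constructor
    · rintro ⟨hl', h'⟩
      exact hanti.injOn hl' hl (h'.trans h.symm)
    · rintro rfl
      exact ⟨hl, h⟩
  rw [orliczAdd, this, csInf_singleton]

namespace Orlicz

theorem map_le_map_of_le (hm1 : ∀ y : ℝ, 0 ≤ y → StrictMonoOn (fun x => φ x y) (Ici 0))
    (hm2 : ∀ x : ℝ, 0 ≤ x → StrictMonoOn (fun y => φ x y) (Ici 0)) {a' b' : ℝ}
    (ha : 0 ≤ a) (hb : 0 ≤ b) (haa : a ≤ a') (hbb : b ≤ b') : φ a b ≤ φ a' b' :=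
  ((hm1 b hb).monotoneOn ha (ha.trans haa) haa).trans
    ((hm2 a' (ha.trans haa)).monotoneOn hb (hb.trans hbb) hbb)

theorem strictAntiOn_map_div (hm1 : ∀ y : ℝ, 0 ≤ y → StrictMonoOn (fun x => φ x y) (Ici 0))
    (hm2 : ∀ x : ℝ, 0 ≤ x → StrictMonoOn (fun y => φ x y) (Ici 0))
    (ha : 0 ≤ a) (hb : 0 ≤ b) (hab : 0 < a + b) :
    StrictAntiOn (fun l => φ (a / l) (b / l)) (Ioi 0) := by
  intro l (hl : 0 < l) l' (hl' : 0 < l') hll'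
  rcases ha.lt_or_eq with ha | rfl
  · calc φ (a / l') (b / l')
        ≤ φ (a / l') (b / l) := (hm2 _ (div_nonneg ha.le hl'.le)).monotoneOn
          (div_nonneg hb hl'.le) (div_nonneg hb hl.le) (div_le_div_of_nonneg_left hb hl hll'.le)
      _ < φ (a / l) (b / l) := hm1 _ (div_nonneg hb hl.le) (div_nonneg ha.le hl'.le)
          (div_nonneg ha.le hl.le) (div_lt_div_of_pos_left ha hl hll')
  · have hb : 0 < b := by simpa using hab
    simpa using hm2 0 le_rfl (div_nonneg hb.le hl'.le) (div_nonneg hb.le hl.le)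
      (div_lt_div_of_pos_left hb hl hll')

theorem exists_pos_map_self_lt_one
    (hc : ContinuousOn (fun z : ℝ × ℝ => φ z.1 z.2) (Ici 0 ×ˢ Ici 0)) (h0 : φ 0 0 = 0) :
    ∃ t > 0, φ t t < 1 := by
  have hdiag : ContinuousWithinAt (fun t => φ t t) (Ici 0) 0 :=
    (hc (0, 0) ⟨self_mem_Ici, self_mem_Ici⟩).comp (f := fun t : ℝ => (t, t))
      (continuous_id.prodMk continuous_id).continuousWithinAt fun _ ht => ⟨ht, ht⟩
  have hsmall : ∀ᶠ t in nhdsWithin 0 (Ioi 0), φ t t < 1 :=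
    nhdsWithin_mono _ Ioi_subset_Ici_self (hdiag.eventually_lt_const (by simp [h0]))
  exact ((eventually_mem_nhdsWithin (s := Ioi (0 : ℝ))).and hsmall).exists

theorem map_div_div_lt_one (hm1 : ∀ y : ℝ, 0 ≤ y → StrictMonoOn (fun x => φ x y) (Ici 0))
    (hm2 : ∀ x : ℝ, 0 ≤ x → StrictMonoOn (fun y => φ x y) (Ici 0)) {t : ℝ} (ht : 0 < t)
    (ht1 : φ t t < 1) (ha : 0 ≤ a) (hb : 0 ≤ b) (hab : 0 < a + b) :
    φ (a / ((a + b) / t)) (b / ((a + b) / t)) < 1 := by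
  have hdiv : ∀ x, 0 ≤ x → x ≤ a + b → x / ((a + b) / t) ≤ t := fun x hx hxab => by
    rw [div_div_eq_mul_div, div_le_iff₀ hab]
    nlinarith
  exact (map_le_map_of_le hm1 hm2 (by positivity) (by positivity)
    (hdiv a ha (by linarith)) (hdiv b hb (by linarith))).trans_lt ht1

end Orlicz

structure IsOrliczFunction (φ : ℝ → ℝ → ℝ) : Prop where
  continuousOn : ContinuousOn (fun z : ℝ × ℝ => φ z.1 z.2) (Ici 0 ×ˢ Ici 0)
  strictMonoOn_left : ∀ y : ℝ, 0 ≤ y → StrictMonoOn (fun x => φ x y) (Ici 0)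
  strictMonoOn_right : ∀ x : ℝ, 0 ≤ x → StrictMonoOn (fun y => φ x y) (Ici 0)
  map_zero_zero : φ 0 0 = 0
  tendsto_atTop : ∀ z₁ z₂ : ℝ, 0 ≤ z₁ → 0 ≤ z₂ → (z₁, z₂) ≠ (0, 0) →
    Tendsto (fun t => φ (t * z₁) (t * z₂)) atTop atTop

namespace IsOrliczFunction

theorem exists_pos_map_div_eq_one (hφ : IsOrliczFunction φ) (ha : 0 ≤ a) (hb : 0 ≤ b)
    (hab : 0 < a + b) : ∃ l > 0, φ (a / l) (b / l) = 1 := by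
  obtain ⟨T, hT1, hT⟩ : ∃ T, 1 ≤ φ (T * a) (T * b) ∧ 0 < T :=
    (((hφ.tendsto_atTop a b ha hb fun h => by simp_all).eventually_ge_atTop 1).and
      (eventually_gt_atTop 0)).exists
  have hlarge : 1 ≤ φ (a / T⁻¹) (b / T⁻¹) := by simpa [div_inv_eq_mul, mul_comm] using hT1
  obtain ⟨t, ht, ht1⟩ := Orlicz.exists_pos_map_self_lt_one hφ.continuousOn hφ.map_zero_zero
  have hcont : ContinuousOn (fun l => φ (a / l) (b / l)) (Ioi 0) :=
    hφ.continuousOn.comp ((continuousOn_const.div continuousOn_id fun l hl => ne_of_gt hl).prodMk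
      (continuousOn_const.div continuousOn_id fun l hl => ne_of_gt hl))
      fun l (hl : 0 < l) => ⟨div_nonneg ha hl.le, div_nonneg hb hl.le⟩
  have hsmall := Orlicz.map_div_div_lt_one hφ.strictMonoOn_left hφ.strictMonoOn_right ht ht1
    ha hb hab
  obtain ⟨l, hl, hl1⟩ := isPreconnected_Ioi.intermediate_value (div_pos hab ht) (inv_pos.2 hT)
    hcont ⟨hsmall.le, hlarge⟩
  exact ⟨l, hl, hl1⟩

theorem orliczAdd_pos_and_map_div_eq_one (hφ : IsOrliczFunction φ) (ha : 0 ≤ a) (hb : 0 ≤ b)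
    (hab : 0 < a + b) :
    0 < orliczAdd φ a b ∧ φ (a / orliczAdd φ a b) (b / orliczAdd φ a b) = 1 := by
  obtain ⟨l, hl, hl1⟩ := hφ.exists_pos_map_div_eq_one ha hb hab
  rw [orliczAdd_eq_of_map_div_eq_one
    (Orlicz.strictAntiOn_map_div hφ.strictMonoOn_left hφ.strictMonoOn_right ha hb hab) hl hl1]
  exact ⟨hl, hl1⟩

theorem orliczAdd_lt_iff (hφ : IsOrliczFunction φ) (ha : 0 ≤ a) (hb : 0 ≤ b) {c : ℝ} :
    orliczAdd φ a b < c ↔ 0 < c ∧ φ (a / c) (b / c) < 1 := by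
  rcases (add_nonneg ha hb).lt_or_eq with hab | hab
  · obtain ⟨hpos, hone⟩ := hφ.orliczAdd_pos_and_map_div_eq_one ha hb hab
    have hanti := Orlicz.strictAntiOn_map_div hφ.strictMonoOn_left hφ.strictMonoOn_right ha hb hab
    constructor
    · intro hlt
      have hc0 := hpos.trans hlt
      exact ⟨hc0, hone ▸ hanti hpos hc0 hlt⟩
    · rintro ⟨hc0, hlt⟩
      exact (hanti.lt_iff_gt (a := c) hc0 hpos).1 (hone ▸ hlt)
  · obtain ⟨rfl, rfl⟩ : a = 0 ∧ b = 0 := ⟨by linarith, by linarith⟩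
    simp [orliczAdd_zero_zero (by simp [hφ.map_zero_zero] : φ 0 0 ≠ 1), hφ.map_zero_zero]

theorem orliczAdd_le_add_div (hφ : IsOrliczFunction φ) (ha : 0 ≤ a) (hb : 0 ≤ b) {t : ℝ}
    (ht : 0 < t) (ht1 : φ t t < 1) : orliczAdd φ a b ≤ (a + b) / t := by
  rcases (add_nonneg ha hb).lt_or_eq with hab | hab
  · exact ((hφ.orliczAdd_lt_iff ha hb).2 ⟨div_pos hab ht, Orlicz.map_div_div_lt_one
      hφ.strictMonoOn_left hφ.strictMonoOn_right ht ht1 ha hb hab⟩).le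
  · obtain ⟨rfl, rfl⟩ : a = 0 ∧ b = 0 := ⟨by linarith, by linarith⟩
    simp [orliczAdd_zero_zero (by simp [hφ.map_zero_zero] : φ 0 0 ≠ 1)]

theorem measurable_orliczAdd {α : Type*} [MeasurableSpace α] (hφ : IsOrliczFunction φ)
    {f g : α → ℝ} (hf : Measurable f) (hg : Measurable g) (hf0 : ∀ x, 0 ≤ f x)
    (hg0 : ∀ x, 0 ≤ g x) : Measurable fun x => orliczAdd φ (f x) (g x) := by
  refine measurable_of_Iio fun c => ?_
  have hpre : (fun x => orliczAdd φ (f x) (g x)) ⁻¹' Iio c =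
      {x | 0 < c ∧ φ (f x / c) (g x / c) < 1} := by
    ext x
    exact hφ.orliczAdd_lt_iff (hf0 x) (hg0 x)
  rw [hpre]
  rcases lt_or_ge 0 c with hc | hc
  · simp only [hc, true_and]
    exact measurableSet_lt (hφ.continuousOn.measurable_comp ((hf.div_const c).prodMk
      (hg.div_const c)) fun x => ⟨div_nonneg (hf0 x) hc.le, div_nonneg (hg0 x) hc.le⟩)
      measurable_const
  · simp [not_lt.2 hc]

theorem integrable_orliczAdd {α : Type*} [MeasurableSpace α] {μ : Measure α}
    (hφ : IsOrliczFunction φ) {f g : α → ℝ} (hf : Measurable f) (hg : Measurable g)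
    (hf0 : ∀ x, 0 ≤ f x) (hg0 : ∀ x, 0 ≤ g x) (hfi : Integrable f μ) (hgi : Integrable g μ) :
    Integrable (fun x => orliczAdd φ (f x) (g x)) μ := by
  obtain ⟨t, ht, ht1⟩ := Orlicz.exists_pos_map_self_lt_one hφ.continuousOn hφ.map_zero_zero
  refine ((hfi.add hgi).div_const t).mono'
    (hφ.measurable_orliczAdd hf hg hf0 hg0).aestronglyMeasurable (ae_of_all _ fun x => ?_)
  rw [Real.norm_of_nonneg (orliczAdd_nonneg φ _ _)]
  exact hφ.orliczAdd_le_add_div (hf0 x) (hg0 x) ht ht1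

end IsOrliczFunction

end OrliczAddition

theorem dual_functional_orlicz_brunn_minkowski_convex_general
    {Ω : Type*} [MeasurableSpace Ω] (μ : Measure Ω)
    (A : Set Ω) (hA0 : μ A ≠ 0)
    (p₁ p₂ : Ω → ℝ) (hp₁m : Measurable p₁) (hp₂m : Measurable p₂)
    (hp₁0 : ∀ x, 0 ≤ p₁ x) (hp₂0 : ∀ x, 0 ≤ p₂ x)
    (hp₁i : Integrable p₁ μ) (hp₂i : Integrable p₂ μ)
    (hpos : ∀ᵐ x ∂(μ.restrict A), 0 < p₁ x + p₂ x)
    (φ : ℝ → ℝ → ℝ)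
    (hconv : ConvexOn ℝ (Set.Ici 0 ×ˢ Set.Ici 0) (fun z : ℝ × ℝ => φ z.1 z.2))
    (hc : ContinuousOn (fun z : ℝ × ℝ => φ z.1 z.2) (Set.Ici 0 ×ˢ Set.Ici 0))
    (hm1 : ∀ y : ℝ, 0 ≤ y → StrictMonoOn (fun x => φ x y) (Set.Ici 0))
    (hm2 : ∀ x : ℝ, 0 ≤ x → StrictMonoOn (fun y => φ x y) (Set.Ici 0))
    (h0 : φ 0 0 = 0)
    (hlim : ∀ z₁ z₂ : ℝ, 0 ≤ z₁ → 0 ≤ z₂ → (z₁, z₂) ≠ (0, 0) →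
      Tendsto (fun t => φ (t * z₁) (t * z₂)) atTop atTop) :
    φ ((∫ x in A, p₁ x ∂μ) / ∫ x in A, orliczAdd φ (p₁ x) (p₂ x) ∂μ)
      ((∫ x in A, p₂ x ∂μ) / ∫ x in A, orliczAdd φ (p₁ x) (p₂ x) ∂μ) ≤ 1 := by
  have hφ : IsOrliczFunction φ := ⟨hc, hm1, hm2, h0, hlim⟩
  set S := fun x => orliczAdd φ (p₁ x) (p₂ x)
  have hS : ∀ᵐ x ∂μ.restrict A, 0 < S x ∧ φ (p₁ x / S x) (p₂ x / S x) = 1 :=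
    hpos.mono fun x hx => hφ.orliczAdd_pos_and_map_div_eq_one (hp₁0 x) (hp₂0 x) hx
  have hSi : Integrable S (μ.restrict A) :=
    (hφ.integrable_orliczAdd hp₁m hp₂m hp₁0 hp₂0 hp₁i hp₂i).restrict
  have : NeZero (μ.restrict A) := ⟨by simpa using hA0⟩
  have hSpos : 0 < ∫ x in A, S x ∂μ := integral_pos_of_ae_pos hSi (hS.mono fun _ hx => hx.1)
  have hsmul : (fun x => S x • (p₁ x / S x, p₂ x / S x)) =ᵐ[μ.restrict A]
      fun x => (p₁ x, p₂ x) :=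
    hS.mono fun x hx => by simp [mul_div_cancel₀ _ hx.1.ne']
  have hmul : (fun x => S x * φ (p₁ x / S x) (p₂ x / S x)) =ᵐ[μ.restrict A] S :=
    hS.mono fun x hx => by simp [hx.2]
  have hjensen := hconv.map_integral_smul_le (f := fun x => (p₁ x / S x, p₂ x / S x)) hc
    (isClosed_Ici.prod isClosed_Ici)
    (hφ.measurable_orliczAdd hp₁m hp₂m hp₁0 hp₂0).aemeasurable (fun x => orliczAdd_nonneg φ _ _)
    hSpos (ae_of_all _ fun x => ⟨div_nonneg (hp₁0 x) (orliczAdd_nonneg φ _ _),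
      div_nonneg (hp₂0 x) (orliczAdd_nonneg φ _ _)⟩)
    ((hp₁i.restrict.prodMk hp₂i.restrict).congr hsmul.symm) (hSi.congr hmul.symm)
  beta_reduce at hjensen
  rw [integral_congr_ae hsmul, integral_congr_ae hmul, integral_pair hp₁i.restrict hp₂i.restrict,
    inv_mul_cancel₀ hSpos.ne'] at hjensen
  simpa [div_eq_inv_mul] using hjensen

theorem dual_functional_orlicz_brunn_minkowski_convex
    {Ω : Type*} [MeasurableSpace Ω] (μ : Measure Ω)
    (A : Set Ω) (hA : MeasurableSet A) (hA0 : μ A ≠ 0)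
    (p₁ p₂ : Ω → ℝ) (hp₁m : Measurable p₁) (hp₂m : Measurable p₂)
    (hp₁0 : ∀ x, 0 ≤ p₁ x) (hp₂0 : ∀ x, 0 ≤ p₂ x)
    (hp₁i : Integrable p₁ μ) (hp₂i : Integrable p₂ μ)
    (hpos : ∀ᵐ x ∂(μ.restrict A), 0 < p₁ x + p₂ x)
    (φ : ℝ → ℝ → ℝ)
    (hconv : ConvexOn ℝ (Set.Ici 0 ×ˢ Set.Ici 0) (fun z : ℝ × ℝ => φ z.1 z.2))
    (hc : ContinuousOn (fun z : ℝ × ℝ => φ z.1 z.2) (Set.Ici 0 ×ˢ Set.Ici 0))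
    (hm1 : ∀ y : ℝ, 0 ≤ y → StrictMonoOn (fun x => φ x y) (Set.Ici 0))
    (hm2 : ∀ x : ℝ, 0 ≤ x → StrictMonoOn (fun y => φ x y) (Set.Ici 0))
    (h0 : φ 0 0 = 0)
    (hlim : ∀ z₁ z₂ : ℝ, 0 ≤ z₁ → 0 ≤ z₂ → (z₁, z₂) ≠ (0, 0) →
      Tendsto (fun t => φ (t * z₁) (t * z₂)) atTop atTop) :
    φ ((∫ x in A, p₁ x ∂μ) / ∫ x in A, orliczAdd φ (p₁ x) (p₂ x) ∂μ)
      ((∫ x in A, p₂ x ∂μ) / ∫ x in A, orliczAdd φ (p₁ x) (p₂ x) ∂μ) ≤ 1 :=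
  dual_functional_orlicz_brunn_minkowski_convex_general μ A hA0 p₁ p₂ hp₁m hp₂m hp₁0 hp₂0 hp₁i hp₂i
    hpos φ hconv hc hm1 hm2 h0 hlim
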